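/- arXiv:2604.25566 — 2 statements merged into one kernel-verified Lean document; each statement's English description precedes it below -/
import Mathlib

section
/- Let q be a nonzero rational number and p a prime with q a p-adic unit. Then D_{p−1}(q) ≡ 2^{I_p(q)} (mod p), where D_n(q) is the n-th Bressoud polynomial and I_p(q) = (p−1)/ord_p(q) is the index of the subgroup of (ℤ/pℤ)^× generated by q mod p. -/
open Polynomial

/-- Congruence of rationals modulo a prime `p`, as a congruence in `ℤ_(p)`. -/
def RatModEqP (p : ℕ) (x y : ℚ) : Prop := x = y ∨ 0 < padicValRat p (x - y)

/-- The reduction of a rational number modulo `p`. -/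
def ratRed (p : ℕ) (q : ℚ) : ZMod p := (q.num : ZMod p) * ((q.den : ZMod p))⁻¹

/-- The multiplicative order `ord_p(q)` of `q mod p`. -/
noncomputable def ordP (p : ℕ) (q : ℚ) : ℕ := orderOf (ratRed p q)

/-- The Bressoud polynomials `D_n(q)`. -/
noncomputable def bressoudD : ℕ → Polynomial ℤ
  | 0 => 1
  | 1 => 1 + X
  | n + 2 => (1 + X - X ^ (n + 2) + X ^ (2 * (n + 2) - 1)) * bressoudD (n + 1)
      - X * (1 - X ^ (n + 1)) * bressoudD n

/-!
Put `G_n(X) = ∏_{i<n} (1 + z^i X)`, whose coefficients are `z^(k(k-1)/2) [n,k]_z` by the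
q-binomial theorem. Since `k(k-1)/2 + k(k+1)/2 = k²`, the Bressoud polynomial `D_n(z)` is the sum
of the coefficients of `G_n` weighted by `z^(k(k+1)/2)`, and its defining recurrence follows from
the two factorisations `G_{n+1} = G_n · (1 + z^n X) = (1 + X) · G_n(zX)`.

If `ζ` has order `d`, then `G_d(ζ) = 1 + ε X^d` with `ε = ∏_{i<d} ζ^i = ±1`, so
`G_{md}(ζ) = (1 + ε X^d)^m`. The weight of `X^{dc}` is `ε^c`, whence
`D_{md}(ζ) = Σ_c C(m,c) ε^{2c} = 2^m`. For `ζ = q mod p` and `md = p - 1` this is the congruence,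
read in `ℤ_[p]` through `ℤ_[p] → ZMod p`.
-/

open Finset

section QPochhammer

variable {R : Type*} [CommRing R]

/-- The q-Pochhammer symbol `(-X; z)_n`. -/
noncomputable def qPochhammer (z : R) (n : ℕ) : R[X] :=
  ∏ i ∈ range n, (1 + C (z ^ i) * X)

noncomputable def weightedCoeffSum (w : ℕ → R) : R[X] →ₗ[R] R :=
  lsum fun k => w k • LinearMap.id

theorem weightedCoeffSum_monomial (w : ℕ → R) (k : ℕ) (a : R) :
    weightedCoeffSum w (monomial k a) = w k * a := by
  simp [weightedCoeffSum, sum_monomial_index]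

theorem weightedCoeffSum_one (w : ℕ → R) : weightedCoeffSum w 1 = w 0 := by
  simpa using weightedCoeffSum_monomial w 0 1

theorem weightedCoeffSum_X (w : ℕ → R) : weightedCoeffSum w X = w 1 := by
  rw [← monomial_one_one_eq_X, weightedCoeffSum_monomial, mul_one]

theorem weightedCoeffSum_const_mul (c : R) (w : ℕ → R) (f : R[X]) :
    weightedCoeffSum (fun k => c * w k) f = c * weightedCoeffSum w f := by
  induction f using Polynomial.induction_on' with
  | add f g hf hg => simp only [map_add, hf, hg, mul_add]
  | monomial k a => simp only [weightedCoeffSum_monomial, mul_assoc]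

theorem weightedCoeffSum_X_mul (w : ℕ → R) (f : R[X]) :
    weightedCoeffSum w (X * f) = weightedCoeffSum (fun k => w (k + 1)) f := by
  induction f using Polynomial.induction_on' with
  | add f g hf hg => simp only [mul_add, map_add, hf, hg]
  | monomial k a => simp only [X_mul_monomial, weightedCoeffSum_monomial]

theorem weightedCoeffSum_comp_C_mul_X (z : R) (w : ℕ → R) (f : R[X]) :
    weightedCoeffSum w (f.comp (C z * X)) = weightedCoeffSum (fun k => w k * z ^ k) f := by
  induction f using Polynomial.induction_on' with
  | add f g hf hg => simp only [add_comp, map_add, hf, hg]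
  | monomial k a =>
    rw [monomial_comp, mul_pow, ← C_pow, ← mul_assoc, ← C_mul, C_mul_X_pow_eq_monomial,
      weightedCoeffSum_monomial, weightedCoeffSum_monomial]
    ring

theorem qPochhammer_succ (z : R) (n : ℕ) :
    qPochhammer z (n + 1) = qPochhammer z n * (1 + C (z ^ n) * X) :=
  prod_range_succ _ _

theorem qPochhammer_succ' (z : R) (n : ℕ) :
    qPochhammer z (n + 1) = (1 + X) * (qPochhammer z n).comp (C z * X) := by
  rw [qPochhammer, prod_range_succ', pow_zero, C_1, one_mul, mul_comm, qPochhammer,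
    Polynomial.prod_comp]
  congr 1
  refine prod_congr rfl fun i _ => ?_
  simp only [add_comp, one_comp, mul_comp, C_comp, X_comp, pow_succ, C_mul]
  ring

theorem weightedCoeffSum_qPochhammer_succ {z : R} {w v : ℕ → R}
    (hw : ∀ k, w (k + 1) = z * v k) (n : ℕ) :
    weightedCoeffSum w (qPochhammer z (n + 1)) =
      weightedCoeffSum w (qPochhammer z n) +
        z ^ (n + 1) * weightedCoeffSum v (qPochhammer z n) := by
  have hsplit : qPochhammer z n * (1 + C (z ^ n) * X) =
      qPochhammer z n + C (z ^ n) * (X * qPochhammer z n) := by ring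
  rw [qPochhammer_succ, hsplit, ← smul_eq_C_mul, map_add, map_smul, weightedCoeffSum_X_mul,
    funext hw, weightedCoeffSum_const_mul, smul_eq_mul]
  ring

theorem weightedCoeffSum_qPochhammer_succ' (z : R) (w : ℕ → R) (n : ℕ) :
    weightedCoeffSum w (qPochhammer z (n + 1)) =
      weightedCoeffSum (fun k => w k * z ^ k) (qPochhammer z n) +
        weightedCoeffSum (fun k => w (k + 1) * z ^ k) (qPochhammer z n) := by
  rw [qPochhammer_succ', add_mul, one_mul, map_add, weightedCoeffSum_X_mul,
    weightedCoeffSum_comp_C_mul_X, weightedCoeffSum_comp_C_mul_X]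

end QPochhammer

section Bressoud

variable {R : Type*} [CommRing R]

/-- `z ^ (k * (k + 1) / 2)`, written as a product to avoid the division. -/
def triangularPow (z : R) (k : ℕ) : R := ∏ i ∈ range (k + 1), z ^ i

theorem triangularPow_succ (z : R) (k : ℕ) :
    triangularPow z (k + 1) = z * (triangularPow z k * z ^ k) := by
  rw [triangularPow, prod_range_succ, ← triangularPow, pow_succ]
  ring

theorem aeval_bressoudD (z : R) (n : ℕ) :
    aeval z (bressoudD n) = weightedCoeffSum (triangularPow z) (qPochhammer z n) := by
  set s := triangularPow z
  -- In Gaussian binomials `S n`, `T n`, `U n` are `Σ_k [n,k]` weighted by `z^(k²)`, `z^(k²+k)`,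
  -- `z^((k+1)²)`.
  set S := fun n => weightedCoeffSum s (qPochhammer z n)
  set T := fun n => weightedCoeffSum (fun k => s k * z ^ k) (qPochhammer z n)
  set U := fun n => weightedCoeffSum (fun k => s (k + 1) * z ^ k) (qPochhammer z n)
  have hS : ∀ n, S (n + 1) = S n + z ^ (n + 1) * T n :=
    weightedCoeffSum_qPochhammer_succ (triangularPow_succ z)
  have hT : ∀ n, T (n + 1) = T n + z ^ (n + 1) * U n :=
    weightedCoeffSum_qPochhammer_succ fun k => by
      simp only [s, triangularPow_succ, pow_succ]; ring
  have hSTU : ∀ n, S (n + 1) = T n + U n := weightedCoeffSum_qPochhammer_succ' z s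
  show aeval z (bressoudD n) = S n
  induction n using Nat.twoStepInduction with
  | zero => simp [S, bressoudD, qPochhammer, weightedCoeffSum_one, s, triangularPow]
  | one =>
    simp [S, bressoudD, qPochhammer, weightedCoeffSum_one, weightedCoeffSum_X, s, triangularPow,
      prod_range_succ]
  | more n ih₀ ih₁ =>
    rw [bressoudD]
    simp only [map_add, map_sub, map_mul, map_pow, map_one, aeval_X, ih₀, ih₁]
    rw [show 2 * (n + 2) - 1 = 2 * n + 3 by omega]
    linear_combination -hS (n + 1) - z ^ (n + 2) * hT n + z ^ (2 * n + 3) * hSTU n +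
      (z - z ^ (n + 2)) * hS n

end Bressoud

section RootsOfUnity

theorem Finset.prod_range_mul_of_periodic {M : Type*} [CommMonoid M] {f : ℕ → M} {d : ℕ}
    (hf : Function.Periodic f d) (m : ℕ) :
    ∏ i ∈ range (m * d), f i = (∏ i ∈ range d, f i) ^ m := by
  induction m with
  | zero => simp
  | succ m ih =>
    rw [Nat.succ_mul, prod_range_add, ih, pow_succ]
    congr 1
    exact prod_congr rfl fun i _ => by rw [add_comm]; exact hf.nat_mul m i

theorem IsPrimitiveRoot.prod_range_pow {R : Type*} [CommRing R] [IsDomain R] {ζ : R} {d : ℕ}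
    (hζ : IsPrimitiveRoot ζ d) (hd : 0 < d) : ∏ i ∈ range d, ζ ^ i = -(-1) ^ d := by
  have h := congrArg (eval 0) (X_pow_sub_C_eq_prod hζ hd (one_pow d))
  simp only [eval_sub, eval_pow, eval_X, eval_C, eval_prod, zero_sub, mul_one, prod_neg,
    card_range, zero_pow hd.ne'] at h
  have hs : ((-1 : R) ^ d) ^ 2 = 1 := by rw [← pow_mul, mul_comm, pow_mul, neg_one_sq, one_pow]
  linear_combination (-(-1) ^ d : R) * h - (∏ i ∈ range d, ζ ^ i) * hs

variable {K : Type*} [Field K]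

theorem IsPrimitiveRoot.qPochhammer_eq {ζ : K} {d : ℕ} (hζ : IsPrimitiveRoot ζ d)
    (hd : 0 < d) : qPochhammer ζ d = 1 + C (∏ i ∈ range d, ζ ^ i) * X ^ d := by
  -- the roots `-ζ⁻ⁱ` of the factors are the roots of `X ^ d - (-1) ^ d`
  have hfactor : ∀ i, 1 + C (ζ ^ i) * X = C (ζ ^ i) * (X - C (ζ⁻¹ ^ i * -1)) := fun i => by
    rw [mul_sub, ← C_mul, inv_pow, mul_neg_one, mul_neg,
      mul_inv_cancel₀ (pow_ne_zero i (hζ.ne_zero hd.ne'))]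
    simp only [C_neg, C_1]
    ring
  rw [qPochhammer, prod_congr rfl fun i _ => hfactor i, prod_mul_distrib, ← map_prod,
    ← X_pow_sub_C_eq_prod hζ.inv hd rfl, mul_sub, ← C_mul, hζ.prod_range_pow hd]
  have hs : -(-1 : K) ^ d * (-1) ^ d = -1 := by rw [neg_mul, ← mul_pow]; simp
  simp only [hs, map_neg, map_one]
  ring

theorem qPochhammer_mul_of_pow_eq_one {R : Type*} [CommRing R] {z : R} {d : ℕ}
    (hz : z ^ d = 1) (m : ℕ) : qPochhammer z (m * d) = qPochhammer z d ^ m :=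
  prod_range_mul_of_periodic (fun i => by rw [pow_add, hz, mul_one]) m

theorem triangularPow_mul_of_pow_eq_one {R : Type*} [CommRing R] {z : R} {d : ℕ}
    (hz : z ^ d = 1) (m : ℕ) : triangularPow z (m * d) = (∏ i ∈ range d, z ^ i) ^ m := by
  rw [triangularPow, prod_range_succ,
    prod_range_mul_of_periodic (fun i => by rw [pow_add, hz, mul_one]) m, mul_comm m, pow_mul, hz,
    one_pow, mul_one]

theorem IsPrimitiveRoot.aeval_bressoudD_mul {ζ : K} {d : ℕ} (hζ : IsPrimitiveRoot ζ d)
    (hd : 0 < d) (m : ℕ) : aeval ζ (bressoudD (m * d)) = 2 ^ m := by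
  have hP : (∏ i ∈ range d, ζ ^ i) * ∏ i ∈ range d, ζ ^ i = 1 := by
    rw [hζ.prod_range_pow hd, neg_mul_neg, ← mul_pow]; simp
  have hterm : ∀ c,
      weightedCoeffSum (triangularPow ζ) ((C (∏ i ∈ range d, ζ ^ i) * X ^ d) ^ c) = 1 := fun c => by
    rw [mul_pow, ← C_pow, ← pow_mul, C_mul_X_pow_eq_monomial, weightedCoeffSum_monomial,
      mul_comm d, triangularPow_mul_of_pow_eq_one hζ.pow_eq_one, ← mul_pow, hP, one_pow]
  rw [aeval_bressoudD, qPochhammer_mul_of_pow_eq_one hζ.pow_eq_one, hζ.qPochhammer_eq hd,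
    add_comm, add_pow, map_sum]
  calc _ = ∑ c ∈ range (m + 1), (m.choose c : K) := sum_congr rfl fun c _ => by
        rw [one_pow, mul_one, mul_comm, ← nsmul_eq_mul, map_nsmul, hterm, nsmul_one]
    _ = 2 ^ m := by rw [← Nat.cast_sum, Nat.sum_range_choose, Nat.cast_pow, Nat.cast_ofNat]

end RootsOfUnity

theorem aeval_ringHom_apply {A B : Type*} [Ring A] [Ring B] (φ : A →+* B) (x : A) (f : ℤ[X]) :
    aeval (φ x) f = φ (aeval x f) :=
  aeval_algHom_apply φ.toIntAlgHom x f

section Reduction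

variable {p : ℕ} [Fact p.Prime]

theorem PadicInt.toZMod_mk_ratCast {q : ℚ} (hq : ‖(q : ℚ_[p])‖ ≤ 1) :
    PadicInt.toZMod (⟨q, hq⟩ : ℤ_[p]) = ratRed p q := by
  let Q : ℤ_[p] := ⟨q, hq⟩
  have hmul : Q * q.den = q.num := by
    apply PadicInt.ext
    rw [PadicInt.coe_mul, PadicInt.coe_natCast, PadicInt.coe_intCast]
    have h := congrArg (Rat.cast : ℚ → ℚ_[p]) (Rat.mul_den_eq_num q)
    rwa [Rat.cast_mul, Rat.cast_natCast, Rat.cast_intCast] at h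
  have hden : (q.den : ZMod p) ≠ 0 := by
    simpa using ((PadicInt.isUnit_den q hq).map PadicInt.toZMod).ne_zero
  rw [ratRed, eq_mul_inv_iff_mul_eq₀ hden]
  simpa using congrArg PadicInt.toZMod hmul

theorem ratRed_ne_zero {q : ℚ} (hq0 : q ≠ 0) (hval : padicValRat p q = 0) : ratRed p q ≠ 0 := by
  have hnorm : ‖(q : ℚ_[p])‖ = 1 := by
    rw [Padic.norm_eq_zpow_neg_valuation (by exact_mod_cast hq0), Padic.valuation_ratCast, hval]
    simp
  rw [← PadicInt.toZMod_mk_ratCast hnorm.le]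
  exact ((PadicInt.isUnit_iff.mpr hnorm).map PadicInt.toZMod).ne_zero

theorem ratModEqP_aeval_of_aeval_ratRed {q : ℚ} (hq : 0 ≤ padicValRat p q) (f : ℤ[X]) {n : ℤ}
    (h : aeval (ratRed p q) f = n) : RatModEqP p (aeval q f) n := by
  have hQ : ‖(q : ℚ_[p])‖ ≤ 1 := by
    rwa [Padic.norm_le_one_iff_val_nonneg, Padic.valuation_ratCast]
  let Q : ℤ_[p] := ⟨q, hQ⟩
  let A : ℤ_[p] := aeval Q f - n
  have hcast : ((aeval q f - n : ℚ) : ℚ_[p]) = A := by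
    have hrat := aeval_ringHom_apply (Rat.castHom ℚ_[p]) q f
    have hint := aeval_ringHom_apply PadicInt.Coe.ringHom Q f
    simp only [Rat.coe_castHom] at hrat
    push_cast [A, ← hrat]
    exact congrArg (· - (n : ℚ_[p])) hint
  have hA : A ∈ RingHom.ker (PadicInt.toZMod : ℤ_[p] →+* ZMod p) := by
    rw [RingHom.mem_ker, map_sub, map_intCast, ← aeval_ringHom_apply,
      PadicInt.toZMod_mk_ratCast, h, sub_self]
  rcases eq_or_ne (aeval q f - n : ℚ) 0 with heq | hne
  · exact .inl (sub_eq_zero.mp heq)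
  · have hA0 : A ≠ 0 := by
      rw [← PadicInt.coe_ne_zero, ← hcast]
      exact_mod_cast hne
    rw [PadicInt.ker_toZMod, PadicInt.maximalIdeal_eq_span_p, ← pow_one (p : ℤ_[p]),
      PadicInt.mem_span_pow_iff_le_valuation A hA0] at hA
    right
    rw [← Padic.valuation_ratCast, hcast, PadicInt.valuation_coe]
    exact_mod_cast hA

end Reduction

/-- For a nonzero rational `q` that is a `p`-adic unit,
`D_{p-1}(q) ≡ 2^{I_p(q)} (mod p)` where `I_p(q) = (p-1)/ord_p(q)`. -/
theorem statement8 (q : ℚ) (hq0 : q ≠ 0) (p : ℕ) (hp : p.Prime)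
    (hval : padicValRat p q = 0) :
    RatModEqP p (Polynomial.aeval q (bressoudD (p - 1)))
      ((2 : ℚ) ^ ((p - 1) / ordP p q)) := by
  have : Fact p.Prime := ⟨hp⟩
  set ζ := ratRed p q
  have hζ : ζ ^ (p - 1) = 1 := ZMod.pow_card_sub_one_eq_one (ratRed_ne_zero hq0 hval)
  have hdvd := orderOf_dvd_of_pow_eq_one hζ
  have hd : 0 < orderOf ζ := Nat.pos_of_dvd_of_pos hdvd (Nat.sub_pos_of_lt hp.one_lt)
  obtain ⟨m, hm⟩ := hdvd
  have hdiv : (p - 1) / ordP p q = m := by rw [ordP, hm, Nat.mul_div_cancel_left _ hd]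
  have hred : aeval ζ (bressoudD (p - 1)) = ((2 ^ m : ℤ) : ZMod p) := by
    rw [hm, mul_comm]
    exact_mod_cast (IsPrimitiveRoot.orderOf ζ).aeval_bressoudD_mul hd m
  rw [hdiv]
  exact_mod_cast ratModEqP_aeval_of_aeval_ratRed hval.ge _ hred
end

section
/- Let (a_p)_p and (b_p)_p be integer sequences indexed by primes such that a_p → ∞, b_p → ∞, and for every positive integer d, a_p^d = o(p) and b_p^d = o(a_p) as p → ∞. Then for every nonzero polynomial F(x,y) with integer coefficients, F(a_p, b_p) ≢ 0 (mod p) for infinitely many primes p. -/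
/-!
Write `F(x, y) = ∑_{i ≤ d} gᵢ(y) xⁱ` with `g_d ≠ 0`. For every polynomial `g` we have
`g(b_p) = O(b_pᵏ) = o(a_p)`, so `gᵢ(b_p) a_pⁱ = o(a_p^{i+1})`. Hence `F(a_p, b_p) = o(p)`, since
`a_p^{i+1} = o(p)`, and `F(a_p, b_p) ~ g_d(b_p) a_p^d`, which is eventually nonzero because
`1 = O(g_d(b_p))`. Eventually `F(a_p, b_p)` is thus a nonzero integer of absolute value `< p`.
-/

open Filter Asymptotics

instance : LinearOrder Nat.Primes := inferInstanceAs (LinearOrder {p : ℕ // p.Prime})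

open Polynomial

instance : NoMaxOrder Nat.Primes where
  exists_gt p :=
    let ⟨q, hpq, hq⟩ := Nat.exists_infinite_primes (p + 1)
    ⟨⟨q, hq⟩, Nat.lt_of_succ_le hpq⟩

theorem Nat.Primes.infinite_setOf_of_eventually {P : Nat.Primes → Prop}
    (h : ∀ᶠ p in atTop, P p) : {p | P p}.Infinite :=
  frequently_cofinite_iff_infinite.mp (h.frequently.filter_mono atTop_le_cofinite)

theorem Polynomial.evalEval_eq_sum_range {R : Type*} [CommSemiring R] (Q : R[X][X]) (x y : R) :
    Q.evalEval x y = ∑ i ∈ Finset.range (Q.natDegree + 1), (Q.coeff i).eval x * y ^ i := by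
  simp [evalEval, eval_eq_sum_range (p := Q), eval_finsetSum]

namespace MvPolynomial

theorem eval_map_comp {R S σ : Type*} [CommSemiring R] [CommSemiring S] (f : R →+* S)
    (x : σ → R) (F : MvPolynomial σ R) : eval (f ∘ x) (map f F) = f (eval x F) := by
  rw [eval_map, eval₂_comp]

variable (R : Type*) [CommRing R]

/-- The outer variable is `X 0`; the coefficients are polynomials in `X 1`. -/
noncomputable def finTwoAlgEquiv : MvPolynomial (Fin 2) R ≃ₐ[R] R[X][X] :=
  (finSuccEquiv R 1).trans (Polynomial.mapAlgEquiv (uniqueAlgEquiv R (Fin 1)))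

variable {R}

theorem evalEval_finTwoAlgEquiv (F : MvPolynomial (Fin 2) R) (x y : R) :
    (finTwoAlgEquiv R F).evalEval y x = eval ![x, y] F := by
  suffices (evalEvalRingHom y x).comp (finTwoAlgEquiv R : MvPolynomial (Fin 2) R →+* R[X][X]) =
      eval ![x, y] from RingHom.congr_fun this F
  refine ringHom_ext (fun r => ?_) (fun i => ?_)
  · rw [RingHom.comp_apply, eval_C, ← algebraMap_eq, RingHom.coe_coe, AlgEquiv.commutes]
    simp
  · fin_cases i
    · simp [finTwoAlgEquiv, finSuccEquiv_X_zero]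
    · rw [RingHom.comp_apply, RingHom.coe_coe, eval_X]
      change evalEval y x (finTwoAlgEquiv R (X (0 : Fin 1).succ)) = y
      rw [finTwoAlgEquiv, AlgEquiv.trans_apply, finSuccEquiv_X_succ, Polynomial.coe_mapAlgEquiv,
        Polynomial.map_C, evalEval_C]
      simp

end MvPolynomial

section Asymptotics

variable {α : Type*} {l : Filter α} {A B N : α → ℝ}

theorem isBigO_pow_pow_of_tendsto_atTop (hA : Tendsto A l atTop) {m n : ℕ} (hmn : m ≤ n) :
    (fun x => A x ^ m) =O[l] (fun x => A x ^ n) := by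
  have := isBigO_atTop_of_degree_le (X ^ m : ℝ[X]) (X ^ n) (by simpa using hmn)
  simp only [eval_pow, eval_X] at this
  exact this.comp_tendsto hA

theorem one_isBigO_eval_of_tendsto_atTop (hB : Tendsto B l atTop) {g : ℝ[X]} (hg : g ≠ 0) :
    (fun _ => (1 : ℝ)) =O[l] (fun x => g.eval (B x)) := by
  have := isBigO_atTop_of_degree_le (C 1) g (by simpa using zero_le_degree_iff.mpr hg)
  simp only [eval_C] at this
  exact this.comp_tendsto hB

theorem isLittleO_eval_of_forall_pow (hB : Tendsto B l atTop)
    (hBA : ∀ k : ℕ, 0 < k → (fun x => B x ^ k) =o[l] A) (g : ℝ[X]) :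
    (fun x => g.eval (B x)) =o[l] A := by
  have hdeg : g.degree ≤ (X ^ (g.natDegree + 1) : ℝ[X]).degree := by
    rw [degree_X_pow]
    exact degree_le_natDegree.trans (by exact_mod_cast Nat.le_succ _)
  have := isBigO_atTop_of_degree_le g _ hdeg
  simp only [eval_pow, eval_X] at this
  exact (this.comp_tendsto hB).trans_isLittleO (hBA _ g.natDegree.succ_pos)

theorem isLittleO_eval_mul_pow (hB : Tendsto B l atTop)
    (hBA : ∀ k : ℕ, 0 < k → (fun x => B x ^ k) =o[l] A) (g : ℝ[X]) (i : ℕ) :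
    (fun x => g.eval (B x) * A x ^ i) =o[l] (fun x => A x ^ (i + 1)) := by
  simpa only [pow_succ'] using
    (isLittleO_eval_of_forall_pow hB hBA g).mul_isBigO (isBigO_refl (fun x => A x ^ i) l)

theorem isLittleO_evalEval (hB : Tendsto B l atTop)
    (hBA : ∀ k : ℕ, 0 < k → (fun x => B x ^ k) =o[l] A)
    (hAN : ∀ k : ℕ, 0 < k → (fun x => A x ^ k) =o[l] N) (Q : ℝ[X][X]) :
    (fun x => Q.evalEval (B x) (A x)) =o[l] N := by
  have := IsLittleO.sum (s := Finset.range (Q.natDegree + 1)) fun i _ =>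
    (isLittleO_eval_mul_pow hB hBA (Q.coeff i) i).trans (hAN _ i.succ_pos)
  simpa only [Finset.sum_fn, ← evalEval_eq_sum_range] using this

theorem eventually_evalEval_ne_zero (hA : Tendsto A l atTop) (hB : Tendsto B l atTop)
    (hBA : ∀ k : ℕ, 0 < k → (fun x => B x ^ k) =o[l] A) {Q : ℝ[X][X]} (hQ : Q ≠ 0) :
    ∀ᶠ x in l, Q.evalEval (B x) (A x) ≠ 0 := by
  set d := Q.natDegree
  set lead : α → ℝ := fun x => Q.leadingCoeff.eval (B x) * A x ^ d
  have hlc := one_isBigO_eval_of_tendsto_atTop hB (leadingCoeff_ne_zero.mpr hQ)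
  have hlower : ((fun x => Q.evalEval (B x) (A x)) - lead) =o[l] lead := by
    have hpow : (fun x => A x ^ d) =O[l] lead := by
      simpa [lead] using hlc.mul (isBigO_refl (fun x => A x ^ d) l)
    refine IsLittleO.trans_isBigO ?_ hpow
    have := IsLittleO.sum (s := Finset.range d) fun i hi =>
      (isLittleO_eval_mul_pow hB hBA (Q.coeff i) i).trans_isBigO
        (isBigO_pow_pow_of_tendsto_atTop hA (Finset.mem_range.mp hi))
    refine this.congr_left fun x => ?_
    simp [lead, evalEval_eq_sum_range, Finset.sum_range_succ, d]
  have hlead : ∀ᶠ x in l, lead x ≠ 0 := by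
    filter_upwards [hlc.eq_zero_imp, hA.eventually_gt_atTop 0] with x hx hAx
    exact mul_ne_zero (fun h => one_ne_zero (hx h)) (pow_ne_zero _ hAx.ne')
  filter_upwards [hlower.isEquivalent.symm.isBigO.eq_zero_imp, hlead] with x hx hx'
  exact fun h => hx' (hx h)

end Asymptotics

/-- Criterion for algebraic independence: if `a_p → ∞`, `b_p → ∞`,
`a_p^d = o(p)` and `b_p^d = o(a_p)` for every `d ≥ 1`, then for every nonzero
`F ∈ ℤ[x,y]` there are infinitely many primes `p` with `F(a_p, b_p) ≢ 0 (mod p)`. -/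
theorem statement12 (a b : Nat.Primes → ℤ)
    (ha : Tendsto a atTop atTop) (hb : Tendsto b atTop atTop)
    (hao : ∀ d : ℕ, 0 < d →
      (fun p : Nat.Primes => (a p : ℝ) ^ d) =o[atTop] (fun p : Nat.Primes => (p : ℝ)))
    (hbo : ∀ d : ℕ, 0 < d →
      (fun p : Nat.Primes => (b p : ℝ) ^ d) =o[atTop] (fun p : Nat.Primes => (a p : ℝ)))
    (F : MvPolynomial (Fin 2) ℤ) (hF : F ≠ 0) :
    {p : Nat.Primes | ¬ ((p : ℕ) : ℤ) ∣ MvPolynomial.eval ![a p, b p] F}.Infinite := by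
  set Q : ℝ[X][X] := MvPolynomial.finTwoAlgEquiv ℝ (MvPolynomial.map (Int.castRingHom ℝ) F)
  have hQ : Q ≠ 0 := by
    simpa [Q] using (MvPolynomial.map_injective _ (Int.cast_injective (α := ℝ))).ne hF
  have hval (p : Nat.Primes) :
      ((MvPolynomial.eval ![a p, b p] F : ℤ) : ℝ) = Q.evalEval (b p : ℝ) (a p : ℝ) := by
    rw [MvPolynomial.evalEval_finTwoAlgEquiv, ← eq_intCast (Int.castRingHom ℝ),
      ← MvPolynomial.eval_map_comp]
    congr 2
    ext i; fin_cases i <;> rfl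
  have ha' : Tendsto (fun p => (a p : ℝ)) atTop atTop := tendsto_intCast_atTop_atTop.comp ha
  have hb' : Tendsto (fun p => (b p : ℝ)) atTop atTop := tendsto_intCast_atTop_atTop.comp hb
  apply Nat.Primes.infinite_setOf_of_eventually
  filter_upwards [(isLittleO_evalEval hb' hbo hao Q).def one_half_pos,
    eventually_evalEval_ne_zero ha' hb' hbo hQ] with p hsmall hne hdvd
  rw [← hval, Real.norm_eq_abs, Real.norm_of_nonneg (Nat.cast_nonneg _)] at hsmall
  rw [← hval, Int.cast_ne_zero] at hne
  have hp : (0 : ℝ) < (p : ℕ) := Nat.cast_pos.mpr p.prop.pos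
  have hlt : |MvPolynomial.eval ![a p, b p] F| < (p : ℕ) := by
    exact_mod_cast (by linarith : |((MvPolynomial.eval ![a p, b p] F : ℤ) : ℝ)| < (p : ℕ))
  exact hne (Int.eq_zero_of_abs_lt_dvd hdvd hlt)
end
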